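/- arXiv:2604.24399 — 12 statements merged into one kernel-verified Lean document; each statement's English description precedes it below -/
import Mathlib

section
/- Let R be an integral domain and f a Euclidean function on R. Then the refinement f̃ of f is a strongly Euclidean function on R. -/
/-- `f` is a Euclidean function on `R`: for all `a b : R` with `b ≠ 0`, there exist
`q, r` with `a = q * b + r` and (`r = 0` or `f r < f b`). -/
def IsEuclideanFn {R : Type*} [CommRing R] (f : R → ℕ) : Prop :=
  ∀ a b : R, b ≠ 0 → ∃ q r : R, a = q * b + r ∧ (r = 0 ∨ f r < f b)

/-- `f` is strongly Euclidean: Euclidean, and `f a ≤ f (a * b)` for nonzero `a, b`. -/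
def IsStronglyEuclideanFn {R : Type*} [CommRing R] (f : R → ℕ) : Prop :=
  IsEuclideanFn f ∧ ∀ a b : R, a ≠ 0 → b ≠ 0 → f a ≤ f (a * b)

/-- `f` is ultra-Euclidean: Euclidean, and `f (a + b) ≤ max (f a) (f b)` for nonzero
`a, b` with `a + b ≠ 0`. -/
def IsUltraEuclideanFn {R : Type*} [CommRing R] (f : R → ℕ) : Prop :=
  IsEuclideanFn f ∧ ∀ a b : R, a ≠ 0 → b ≠ 0 → a + b ≠ 0 → f (a + b) ≤ max (f a) (f b)

/-- `f` is uniquely Euclidean: for all `a b : R` with `b ≠ 0`, there is a *unique* pair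
`(q, r)` with `a = q * b + r` and (`r = 0` or `f r < f b`). -/
def IsUniquelyEuclideanFn {R : Type*} [CommRing R] (f : R → ℕ) : Prop :=
  ∀ a b : R, b ≠ 0 → ∃! qr : R × R, a = qr.1 * b + qr.2 ∧ (qr.2 = 0 ∨ f qr.2 < f b)

/-- The refinement of `f`: `f̃ a` is the minimum of `f (a * b)` over nonzero `b`. -/
noncomputable def refinement {R : Type*} [CommRing R] (f : R → ℕ) (a : R) : ℕ :=
  sInf {n : ℕ | ∃ b : R, b ≠ 0 ∧ f (a * b) = n}

theorem refinement_strongly_euclidean {R : Type*} [CommRing R] [IsDomain R]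
    (f : R → ℕ) (hf : IsEuclideanFn f) :
    IsStronglyEuclideanFn (refinement f) := by
  have hne : ∀ a : R, {n : ℕ | ∃ b : R, b ≠ 0 ∧ f (a * b) = n}.Nonempty :=
    fun a => ⟨f (a * 1), 1, one_ne_zero, rfl⟩
  have hle : ∀ (a b : R), b ≠ 0 → refinement f a ≤ f (a * b) :=
    fun a b hb => Nat.sInf_le ⟨b, hb, rfl⟩
  constructor
  · intro a b hb
    obtain ⟨c, hc, hfc⟩ := Nat.sInf_mem (hne b)
    obtain ⟨q, r, hqr, hr⟩ := hf a (b * c) (mul_ne_zero hb hc)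
    refine ⟨q * c, r, by rw [hqr]; ring, ?_⟩
    rcases hr with h | h
    · exact Or.inl h
    · right
      calc refinement f r ≤ f (r * 1) := hle r 1 one_ne_zero
        _ = f r := by rw [mul_one]
        _ < f (b * c) := h
        _ = refinement f b := hfc
  · intro a b ha hb
    obtain ⟨c, hc, hfc⟩ := Nat.sInf_mem (hne (a * b))
    calc refinement f a ≤ f (a * (b * c)) := hle a (b * c) (mul_ne_zero hb hc)
      _ = f (a * b * c) := by rw [mul_assoc]
      _ = refinement f (a * b) := hfc
end

section
/- Let R be an integral domain and f a strongly Euclidean function on R. Then f is uniquely Euclidean if and only if f is ultra-Euclidean. -/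
theorem uniquely_euclidean_iff_ultra_euclidean {R : Type*} [CommRing R] [IsDomain R]
    (f : R → ℕ) (hf : IsStronglyEuclideanFn f) :
    IsUniquelyEuclideanFn f ↔ IsUltraEuclideanFn f := by
  obtain ⟨heuc, hstr⟩ := hf
  have hneg : ∀ x : R, x ≠ 0 → f (-x) = f x := by
    intro x hx
    have h1 : f x ≤ f (x * (-1)) := hstr x (-1) hx (by simp)
    have h2 : f (-x) ≤ f (-x * (-1)) := hstr (-x) (-1) (neg_ne_zero.mpr hx) (by simp)
    simp only [mul_neg_one, neg_neg] at h1 h2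
    omega
  constructor
  · intro hu
    refine ⟨heuc, ?_⟩
    intro a b ha hb hab
    by_contra h
    push_neg at h
    have h1 : f a < f (a + b) := lt_of_le_of_lt (le_max_left _ _) h
    have h2 : f b < f (a + b) := lt_of_le_of_lt (le_max_right _ _) h
    obtain ⟨qr, _, huniq⟩ := hu a (a + b) hab
    have e1 : ((0 : R), a) = qr := huniq (0, a) ⟨by ring, Or.inr h1⟩
    have e2 : ((1 : R), -b) = qr := huniq (1, -b) ⟨by ring, Or.inr (by rw [hneg b hb]; exact h2)⟩
    have : ((0 : R), a) = ((1 : R), -b) := e1.trans e2.symm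
    have : (0 : R) = 1 := congrArg Prod.fst this
    exact zero_ne_one this
  · rintro ⟨_, hultra⟩
    intro a b hb
    obtain ⟨q, r, hqr, hr⟩ := heuc a b hb
    refine ⟨(q, r), ⟨hqr, hr⟩, ?_⟩
    rintro ⟨q', r'⟩ ⟨hqr', hr'⟩
    simp only at hqr' hr'
    have hq : q' = q := by
      by_contra hne
      have key : b * (q - q') = r' - r := by linear_combination hqr' - hqr
      have hbq : b * (q - q') ≠ 0 :=
        mul_ne_zero hb (sub_ne_zero.mpr fun h => hne h.symm)
      have hle : f b ≤ f (r' - r) := key ▸ hstr b (q - q') hb (sub_ne_zero.mpr fun h => hne h.symm)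
      have hrr : r' - r ≠ 0 := key ▸ hbq
      rcases eq_or_ne r 0 with hr0 | hrne
      · rcases eq_or_ne r' 0 with hr'0 | hr'ne
        · exact hrr (by rw [hr0, hr'0, sub_zero])
        · have hr'lt := hr'.resolve_left hr'ne
          rw [hr0, sub_zero] at hle; omega
      · have hrlt := hr.resolve_left hrne
        rcases eq_or_ne r' 0 with hr'0 | hr'ne
        · rw [hr'0, zero_sub, hneg r hrne] at hle
          omega
        · have hr'lt := hr'.resolve_left hr'ne
          have := hultra r' (-r) hr'ne (neg_ne_zero.mpr hrne) (by rwa [← sub_eq_add_neg])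
          rw [← sub_eq_add_neg, hneg r hrne] at this
          omega
    subst hq
    have : r' = r := by linear_combination hqr - hqr'
    simp [this]
end

section
/- Let R be an integral domain and f a uniquely Euclidean function on R. Then f is strongly Euclidean on R, i.e., f(a) ≤ f(a*b) for all nonzero a, b in R. -/
theorem uniquely_euclidean_implies_strongly_euclidean {R : Type*} [CommRing R] [IsDomain R]
    (f : R → ℕ) (hf : IsUniquelyEuclideanFn f) :
    IsStronglyEuclideanFn f := by
  constructor
  · intro a b hb
    obtain ⟨⟨q, r⟩, ⟨heq, hlt⟩, -⟩ := hf a b hb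
    exact ⟨q, r, heq, hlt⟩
  · intro a b ha hb
    by_contra h
    push_neg at h
    obtain ⟨qr, hqr, huniq⟩ := hf (a * b) a ha
    have h1 : ((b, (0 : R)) : R × R) = (0, a * b) := by
      have e1 := huniq (b, 0) ⟨by ring, Or.inl rfl⟩
      have e2 := huniq (0, a * b) ⟨by ring, Or.inr (by simpa [mul_comm] using h)⟩
      rw [e1, e2]
    exact hb (congrArg Prod.fst h1)
end

section
/- Let R be an integral domain and f a Euclidean function on R. Then f is uniquely Euclidean if and only if f is both strongly Euclidean and ultra-Euclidean. -/
theorem uniquely_euclidean_iff_strongly_and_ultra {R : Type*} [CommRing R] [IsDomain R]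
    (f : R → ℕ) (hf : IsEuclideanFn f) :
    IsUniquelyEuclideanFn f ↔ (IsStronglyEuclideanFn f ∧ IsUltraEuclideanFn f) := by
  constructor
  · intro hu
    have hstrong : ∀ a b : R, a ≠ 0 → b ≠ 0 → f a ≤ f (a * b) := by
      intro a b ha hb
      by_contra h
      push_neg at h
      obtain ⟨_, _, huniq⟩ := hu (a * b) a ha
      have h1 : ((b, (0:R)) : R × R) = ((0, a*b) : R × R) := by
        have e1 := huniq (b, 0) ⟨by ring, Or.inl rfl⟩
        have e2 := huniq (0, a*b) ⟨by ring, Or.inr h⟩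
        rw [e1, e2]
      exact hb (by simpa using congrArg Prod.fst h1)
    have hneg : ∀ a : R, a ≠ 0 → f (-a) ≤ f a := by
      intro a ha
      have := hstrong (-a) (-1) (neg_ne_zero.mpr ha) (neg_ne_zero.mpr one_ne_zero)
      simpa using this
    refine ⟨⟨hf, hstrong⟩, hf, ?_⟩
    intro a b ha hb hab
    by_contra h
    push_neg at h
    have hfa : f a < f (a + b) := lt_of_le_of_lt (le_max_left _ _) h
    have hfb : f b < f (a + b) := lt_of_le_of_lt (le_max_right _ _) h
    obtain ⟨_, _, huniq⟩ := hu a (a + b) hab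
    have h1 : (((0:R), a) : R × R) = ((1, -b) : R × R) := by
      have e1 := huniq (0, a) ⟨by ring, Or.inr hfa⟩
      have e2 := huniq (1, -b) ⟨by ring, Or.inr (lt_of_le_of_lt (hneg b hb) hfb)⟩
      rw [e1, e2]
    exact one_ne_zero ((congrArg Prod.fst h1).symm)
  · rintro ⟨⟨-, hstrong⟩, -, hultra⟩
    have hneg : ∀ a : R, a ≠ 0 → f (-a) = f a := by
      intro a ha
      have h1 := hstrong (-a) (-1) (neg_ne_zero.mpr ha) (neg_ne_zero.mpr one_ne_zero)
      have h2 := hstrong a (-1) ha (neg_ne_zero.mpr one_ne_zero)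
      simp only [mul_neg_one, neg_neg] at h1 h2
      omega
    intro a b hb
    obtain ⟨q, r, heq, hr⟩ := hf a b hb
    refine ⟨(q, r), ⟨heq, hr⟩, ?_⟩
    rintro ⟨q', r'⟩ ⟨heq', hr'⟩
    dsimp only at heq' hr'
    have hrr : r' = r := by
      by_contra hne
      have hd : (q - q') * b = r' - r := by linear_combination heq' - heq
      have hdne : r' - r ≠ 0 := sub_ne_zero.mpr hne
      have hq : q - q' ≠ 0 := by
        intro h0
        rw [h0, zero_mul] at hd
        exact hdne hd.symm
      have hfb : f b ≤ f (r' - r) := by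
        rw [← hd]
        calc f b ≤ f (b * (q - q')) := hstrong b (q - q') hb hq
          _ = f ((q - q') * b) := by rw [mul_comm]
      have hsmall : f (r' - r) < f b := by
        rcases eq_or_ne r 0 with hr0 | hrne
        · have hr'ne : r' ≠ 0 := fun h => hne (h.trans hr0.symm)
          rw [hr0, sub_zero]
          exact hr'.resolve_left hr'ne
        · have hrlt := hr.resolve_left hrne
          rcases eq_or_ne r' 0 with hr'0 | hr'ne
          · rw [hr'0, zero_sub, hneg r hrne]; exact hrlt
          · have hr'lt := hr'.resolve_left hr'ne
            have := hultra r' (-r) hr'ne (neg_ne_zero.mpr hrne)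
              (by rwa [← sub_eq_add_neg])
            rw [← sub_eq_add_neg, hneg r hrne] at this
            exact lt_of_le_of_lt this (max_lt hr'lt hrlt)
      omega
    have hqq : q' = q := by
      have h2 : q * b + r = q' * b + r := by
        rw [← hrr] at heq ⊢; exact heq.symm.trans heq'
      exact mul_right_cancel₀ hb (add_right_cancel h2).symm
    simp [hqq, hrr]
end

section
/- Let R be an integral domain and f a uniquely Euclidean function on R. Then the refinement f̃ of f is also uniquely Euclidean on R. -/
/-- If `f` is uniquely Euclidean on a domain, then `f b ≤ f (b * x)` for nonzero `b, x`. -/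
lemma unique_mul_le {R : Type*} [CommRing R] [IsDomain R]
    (f : R → ℕ) (hf : IsUniquelyEuclideanFn f) {b x : R} (hb : b ≠ 0) (hx : x ≠ 0) :
    f b ≤ f (b * x) := by
  by_contra h
  push_neg at h
  obtain ⟨qr, hqr, huniq⟩ := hf (b * x) b hb
  have h1 : ((x, 0) : R × R) = qr := huniq (x, 0) (by simp [mul_comm])
  have h2 : ((0, b * x) : R × R) = qr := huniq (0, b * x) (by simp [h])
  have : (x : R) = 0 := by
    have := h1.trans h2.symm
    have h0 : b * x = 0 := by simpa using congrArg Prod.snd this.symm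
    exact (mul_eq_zero.mp h0).resolve_left hb
  exact hx this

/-- For a uniquely Euclidean `f` on a domain, the refinement agrees with `f` on
nonzero elements. -/
lemma refinement_eq {R : Type*} [CommRing R] [IsDomain R]
    (f : R → ℕ) (hf : IsUniquelyEuclideanFn f) {a : R} (ha : a ≠ 0) :
    refinement f a = f a := by
  have hmem : f a ∈ {n : ℕ | ∃ b : R, b ≠ 0 ∧ f (a * b) = n} :=
    ⟨1, one_ne_zero, by rw [mul_one]⟩
  refine le_antisymm (Nat.sInf_le hmem) ?_
  obtain ⟨b, hb, hfb⟩ := Nat.sInf_mem ⟨f a, hmem⟩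
  rw [refinement, ← hfb]
  exact unique_mul_le f hf ha hb

theorem refinement_uniquely_euclidean {R : Type*} [CommRing R] [IsDomain R]
    (f : R → ℕ) (hf : IsUniquelyEuclideanFn f) :
    IsUniquelyEuclideanFn (refinement f) := by
  intro a b hb
  obtain ⟨qr, hqr, huniq⟩ := hf a b hb
  have key : ∀ r : R, (r = 0 ∨ refinement f r < refinement f b) ↔ (r = 0 ∨ f r < f b) := by
    intro r
    rcases eq_or_ne r 0 with hr | hr
    · simp [hr]
    · rw [refinement_eq f hf hr, refinement_eq f hf hb]
  refine ⟨qr, ⟨hqr.1, (key qr.2).mpr hqr.2⟩, fun y hy => huniq y ⟨hy.1, (key y.2).mp hy.2⟩⟩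
end

section
/- Let R be an integral domain admitting a uniquely Euclidean function f. Then either R is a field, or there exists a field K such that R is isomorphic as a ring to the polynomial ring K[x]. -/
/-!
Uniqueness of division with remainder makes `f` behave like a degree: if `f r < f b` then
`f b ≤ f (q * b + r)` for every `q ≠ 0`, since otherwise `(0, q * b + r)` would be a second
quotient–remainder pair. From this, `f` is monotone under multiplication, strictly so by a
nonunit, and ultrametric; the units are exactly the elements with `f a ≤ f 1`, so the units
together with `0` form a subfield `K`. If `R` is not a field, a nonzero nonunit `x` of minimal
`f` leaves only remainders in `K`, so repeated division by `x` writes every element as a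
polynomial in `x` over `K`, and `x` is transcendental over `K` because it divides no unit.
-/

open Polynomial

namespace IsUniquelyEuclideanFn

variable {R : Type*} [CommRing R] {f : R → ℕ}

theorem le_apply_mul_add (hf : IsUniquelyEuclideanFn f) {q b r : R} (hq : q ≠ 0) (hb : b ≠ 0)
    (hr : r = 0 ∨ f r < f b) : f b ≤ f (q * b + r) := by
  by_contra! h
  obtain ⟨_, -, huniq⟩ := hf (q * b + r) b hb
  have hpairs : ((q, r) : R × R) = (0, q * b + r) :=
    (huniq (q, r) ⟨rfl, hr⟩).trans (huniq (0, q * b + r) ⟨by ring, Or.inr h⟩).symm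
  exact hq (Prod.ext_iff.mp hpairs).1

theorem le_apply_mul (hf : IsUniquelyEuclideanFn f) {q b : R} (hq : q ≠ 0) (hb : b ≠ 0) :
    f b ≤ f (q * b) := by
  simpa using hf.le_apply_mul_add hq hb (Or.inl rfl)

variable [Nontrivial R]

theorem apply_one_le (hf : IsUniquelyEuclideanFn f) {a : R} (ha : a ≠ 0) : f 1 ≤ f a := by
  simpa using hf.le_apply_mul ha one_ne_zero

theorem apply_neg (hf : IsUniquelyEuclideanFn f) (a : R) : f (-a) = f a := by
  rcases eq_or_ne a 0 with rfl | ha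
  · rw [neg_zero]
  have hm1 : (-1 : R) ≠ 0 := neg_ne_zero.mpr one_ne_zero
  apply le_antisymm
  · simpa using hf.le_apply_mul hm1 (neg_ne_zero.mpr ha)
  · simpa using hf.le_apply_mul hm1 ha

theorem apply_add_le_max (hf : IsUniquelyEuclideanFn f) {a b : R} (hab : a + b ≠ 0) :
    f (a + b) ≤ max (f a) (f b) := by
  by_contra! h
  obtain ⟨_, -, huniq⟩ := hf a (a + b) hab
  have ha : f a < f (a + b) := (le_max_left _ _).trans_lt h
  have hb : f (-b) < f (a + b) := by rw [hf.apply_neg]; exact (le_max_right _ _).trans_lt h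
  have hpairs : ((0, a) : R × R) = (1, -b) :=
    (huniq (0, a) ⟨by ring, Or.inr ha⟩).trans (huniq (1, -b) ⟨by ring, Or.inr hb⟩).symm
  exact zero_ne_one (Prod.ext_iff.mp hpairs).1

theorem isUnit_iff_apply_le (hf : IsUniquelyEuclideanFn f) {a : R} (ha : a ≠ 0) :
    IsUnit a ↔ f a ≤ f 1 := by
  refine ⟨fun ⟨u, hu⟩ => ?_, fun hle => ?_⟩
  · simpa [← hu] using hf.le_apply_mul (u⁻¹).ne_zero u.ne_zero
  obtain ⟨⟨q, r⟩, ⟨hdiv, hr : r = 0 ∨ f r < f a⟩, -⟩ := hf 1 a ha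
  rcases eq_or_ne r 0 with rfl | hr0
  · exact .of_mul_eq_one q (by rw [hdiv, add_zero, mul_comm])
  · have := hf.apply_one_le hr0
    have := hr.resolve_left hr0
    omega

theorem isUnit_add (hf : IsUniquelyEuclideanFn f) {a b : R} (ha : IsUnit a) (hb : IsUnit b)
    (hab : a + b ≠ 0) : IsUnit (a + b) := by
  rw [hf.isUnit_iff_apply_le hab]
  exact (hf.apply_add_le_max hab).trans <| max_le
    ((hf.isUnit_iff_apply_le ha.ne_zero).mp ha) ((hf.isUnit_iff_apply_le hb.ne_zero).mp hb)

def constants (hf : IsUniquelyEuclideanFn f) : Subring R where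
  carrier := {a | a = 0 ∨ IsUnit a}
  zero_mem' := .inl rfl
  one_mem' := .inr isUnit_one
  add_mem' := by
    rintro a b (rfl | ha) (rfl | hb)
    · exact .inl (add_zero 0)
    · simpa using Or.inr hb
    · simpa using Or.inr ha
    · exact or_iff_not_imp_left.mpr (hf.isUnit_add ha hb)
  neg_mem' := by
    rintro a (rfl | ha)
    · exact .inl neg_zero
    · exact .inr ha.neg
  mul_mem' := by
    rintro a b (rfl | ha) (rfl | hb)
    · exact .inl (zero_mul 0)
    · exact .inl (zero_mul b)
    · exact .inl (mul_zero a)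
    · exact .inr (ha.mul hb)

theorem mem_constants (hf : IsUniquelyEuclideanFn f) {a : R} :
    a ∈ hf.constants ↔ a = 0 ∨ IsUnit a :=
  Iff.rfl

theorem isField_constants (hf : IsUniquelyEuclideanFn f) : IsField hf.constants where
  exists_pair_ne := ⟨0, 1, zero_ne_one⟩
  mul_comm := mul_comm
  mul_inv_cancel := by
    rintro ⟨a, ha | ⟨u, rfl⟩⟩ hne
    · exact absurd (Subtype.ext ha) hne
    · exact ⟨⟨↑u⁻¹, .inr (u⁻¹).isUnit⟩, Subtype.ext u.mul_inv⟩

end IsUniquelyEuclideanFn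

theorem Polynomial.eval₂_subtype_injective {R : Type*} [CommRing R] [IsDomain R] {K : Subring R}
    (hK : ∀ c ∈ K, c = 0 ∨ IsUnit c) {x : R} (hx : x ≠ 0) (hxu : ¬IsUnit x) :
    Function.Injective (eval₂RingHom K.subtype x) := by
  rw [injective_iff_map_eq_zero]
  intro p
  induction p using Polynomial.recOnHorner with
  | M0 => exact fun _ => rfl
  | MC p c hp0 hc _ =>
    -- `x` divides `p(x)`, so `p(x) + c = 0` would make `x` divide the unit `c`.
    intro hpc
    obtain ⟨p', rfl⟩ := X_dvd_iff.mpr hp0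
    have hcu : IsUnit (c : R) := (hK c c.2).resolve_left (by exact_mod_cast hc)
    refine absurd (isUnit_of_dvd_unit ⟨-eval₂RingHom K.subtype x p', ?_⟩ hcu) hxu
    simp only [map_add, coe_eval₂RingHom, eval₂_mul, eval₂_X, eval₂_C,
      Subring.subtype_apply] at hpc ⊢
    linear_combination hpc
  | MX p _ ih =>
    intro hpX
    rw [coe_eval₂RingHom, eval₂_mul_X, mul_eq_zero, or_iff_left hx] at hpX
    rw [ih hpX, zero_mul]

namespace IsUniquelyEuclideanFn

variable {R : Type*} [CommRing R] [IsDomain R] {f : R → ℕ}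

theorem apply_lt_apply_mul (hf : IsUniquelyEuclideanFn f) {q b : R} (hq : q ≠ 0)
    (hb : b ≠ 0) (hbu : ¬IsUnit b) : f q < f (q * b) := by
  by_contra! hle
  obtain ⟨⟨c, r⟩, ⟨hdiv, hr : r = 0 ∨ f r < f (q * b)⟩, -⟩ :=
    hf q (q * b) (mul_ne_zero hq hb)
  have hr_eq : r = q * (1 - c * b) := by linear_combination -hdiv
  rcases eq_or_ne (1 - c * b) 0 with hcb | hcb
  · exact hbu (.of_mul_eq_one c (by linear_combination -hcb))
  · have hr0 : r ≠ 0 := hr_eq ▸ mul_ne_zero hq hcb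
    have := hf.le_apply_mul hcb hq
    rw [mul_comm, ← hr_eq] at this
    have := hr.resolve_left hr0
    omega

variable (hf : IsUniquelyEuclideanFn f) {x : R} (hx : x ≠ 0) (hxu : ¬IsUnit x)
  (hmin : ∀ a, a ≠ 0 → ¬IsUnit a → f x ≤ f a)
include hf hx hxu hmin

theorem eval₂_constants_surjective :
    Function.Surjective (eval₂RingHom hf.constants.subtype x) := by
  intro a
  induction hfa : f a using Nat.strong_induction_on generalizing a with
  | _ n ih =>
  obtain ⟨⟨q, r⟩, ⟨hdiv : a = q * x + r, hr : r = 0 ∨ f r < f x⟩, -⟩ := hf a x hx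
  have hrK : r ∈ hf.constants := by
    rcases hr with rfl | hr
    · exact hf.constants.zero_mem
    by_contra hrK
    rw [mem_constants, not_or] at hrK
    exact absurd (hmin r hrK.1 hrK.2) (not_le.mpr hr)
  rcases eq_or_ne q 0 with rfl | hq
  · exact ⟨C ⟨r, hrK⟩, by simp [hdiv]⟩
  have hqx : f (q * x) ≤ f a := by
    rcases eq_or_ne r 0 with rfl | hr0
    · rw [hdiv, add_zero]
    -- `q * x = a - r` with `f r < f x ≤ f a`, so the ultrametric inequality bounds `f (q * x)`.
    have hxa : f x ≤ f a := hdiv ▸ hf.le_apply_mul_add hq hx hr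
    have hr' := hr.resolve_left hr0
    have hsub : q * x = a + -r := by linear_combination -hdiv
    have := hf.apply_add_le_max (hsub ▸ mul_ne_zero hq hx)
    rw [← hsub, hf.apply_neg] at this
    omega
  obtain ⟨p, hp⟩ := ih (f q) (hfa ▸ (hf.apply_lt_apply_mul hq hx hxu).trans_le hqx) q rfl
  refine ⟨p * X + C ⟨r, hrK⟩, ?_⟩
  rw [coe_eval₂RingHom] at hp
  simp [hp, hdiv]

end IsUniquelyEuclideanFn

universe u

theorem uniquely_euclidean_implies_K_or_Kx {R : Type u} [CommRing R] [IsDomain R]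
    (f : R → ℕ) (hf : IsUniquelyEuclideanFn f) :
    IsField R ∨ ∃ (K : Type u) (_ : Field K), Nonempty (R ≃+* Polynomial K) := by
  refine or_iff_not_imp_left.mpr fun hR => ?_
  obtain ⟨x₀, hx₀, hx₀u⟩ := Ring.exists_not_isUnit_of_not_isField hR
  let s : Set R := {a | a ≠ 0 ∧ ¬IsUnit a}
  have hs : x₀ ∈ s := ⟨hx₀, hx₀u⟩
  set x := Function.argminOn f s ⟨x₀, hs⟩
  obtain ⟨hx, hxu⟩ : x ∈ s := Function.argminOn_mem f s _
  have hmin : ∀ a, a ≠ 0 → ¬IsUnit a → f x ≤ f a := fun a ha hau =>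
    Function.argminOn_le f s ⟨ha, hau⟩
  have hinj := eval₂_subtype_injective (fun _ => hf.mem_constants.mp) hx hxu
  have hsurj := hf.eval₂_constants_surjective hx hxu hmin
  exact ⟨hf.constants, hf.isField_constants.toField,
    ⟨(RingEquiv.ofBijective _ ⟨hinj, hsurj⟩).symm⟩⟩
end

section
/- Let R be an integral domain admitting a function f that is both strongly Euclidean and uniquely Euclidean. Then either R is a field, or there exists a field K such that R is isomorphic as a ring to the polynomial ring K[x]. -/
open Polynomial

universe u

section Polynomial

variable {K R : Type*} [CommRing K] [CommRing R] (ι : K →+* R) (x : R)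

theorem Polynomial.eval₂_injective_of_mul_add_eq_zero
    (h : ∀ (q : R) (c : K), q * x + ι c = 0 → q = 0 ∧ c = 0) :
    Function.Injective (eval₂RingHom ι x) := by
  refine (injective_iff_map_eq_zero _).2 fun p hp => ?_
  induction hn : p.natDegree using Nat.strong_induction_on generalizing p with
  | _ n ih =>
  have hsplit : eval₂RingHom ι x p.divX * x + ι (p.coeff 0) = 0 := by
    have := congrArg (eval₂ ι x) (X_mul_divX_add p)
    simp only [eval₂_add, eval₂_mul, eval₂_X, eval₂_C] at this
    rwa [coe_eval₂RingHom, mul_comm, this]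
  obtain ⟨hq, hc⟩ := h _ _ hsplit
  have hdivX : p.divX = 0 := by
    rcases Nat.eq_zero_or_pos n with rfl | hn₀
    · exact divX_eq_zero_iff.2 (eq_C_of_natDegree_eq_zero hn)
    · exact ih _ (by rw [natDegree_divX_eq_natDegree_tsub_one, hn]; omega) _ hq rfl
  rw [← X_mul_divX_add p, hdivX, hc]
  simp

theorem Polynomial.eval₂_surjective_of_exists_mul_add (μ : R → ℕ)
    (h : ∀ a : R, ∃ (q : R) (c : K), a = q * x + ι c ∧ (q = 0 ∨ μ q < μ a)) :
    Function.Surjective (eval₂RingHom ι x) := by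
  intro a
  induction hn : μ a using Nat.strong_induction_on generalizing a with
  | _ n ih =>
  obtain ⟨q, c, rfl, hq⟩ := h a
  rcases hq with rfl | hq
  · exact ⟨C c, by simp⟩
  · obtain ⟨p, rfl⟩ := ih _ (hn ▸ hq) q rfl
    exact ⟨p * X + C c, by simp⟩

end Polynomial

def unitsWithZero (R : Type*) [CommRing R]
    (hadd : ∀ a b : R, IsUnit a → IsUnit b → a + b ≠ 0 → IsUnit (a + b)) : Subring R where
  carrier := {a | a = 0 ∨ IsUnit a}
  zero_mem' := Or.inl rfl
  one_mem' := Or.inr isUnit_one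
  add_mem' := by
    rintro a b (rfl | ha) (rfl | hb)
    · simp
    · simp [hb]
    · simp [ha]
    · by_cases hab : a + b = 0
      exacts [Or.inl hab, Or.inr (hadd a b ha hb hab)]
  neg_mem' := by
    rintro a (rfl | ha)
    exacts [Or.inl neg_zero, Or.inr ha.neg]
  mul_mem' := by
    rintro a b (rfl | ha) (rfl | hb)
    · simp
    · simp
    · simp
    · exact Or.inr (ha.mul hb)

theorem isField_unitsWithZero {R : Type*} [CommRing R] [Nontrivial R]
    (hadd : ∀ a b : R, IsUnit a → IsUnit b → a + b ≠ 0 → IsUnit (a + b)) :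
    IsField (unitsWithZero R hadd) where
  exists_pair_ne := ⟨0, 1, fun h => zero_ne_one congr($h.1)⟩
  mul_comm := mul_comm
  mul_inv_cancel {a} ha := by
    obtain ⟨u, hu⟩ := a.2.resolve_left fun h => ha (Subtype.ext h)
    exact ⟨⟨↑u⁻¹, Or.inr u⁻¹.isUnit⟩, Subtype.ext (by simp [← hu])⟩

theorem isField_of_forall_isUnit {R : Type*} [CommRing R] [Nontrivial R]
    (h : ∀ a : R, a ≠ 0 → IsUnit a) : IsField R :=
  ⟨exists_pair_ne R, mul_comm, fun ha => (h _ ha).exists_right_inv⟩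

variable {R : Type*} [CommRing R] {f : R → ℕ}

namespace IsStronglyEuclideanFn

variable (hf : IsStronglyEuclideanFn f)
include hf

theorem map_lt_map_mul [IsDomain R] {a b : R} (ha : a ≠ 0) (hb : b ≠ 0) (hbu : ¬IsUnit b) :
    f a < f (a * b) := by
  obtain ⟨s, r, hsr, hr⟩ := hf.1 a (a * b) (mul_ne_zero ha hb)
  have hsb : 1 - s * b ≠ 0 := fun h =>
    hbu (.of_mul_eq_one s (by linear_combination -h))
  have hra : r = a * (1 - s * b) := by linear_combination -hsr
  have hr0 : r ≠ 0 := hra ▸ mul_ne_zero ha hsb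
  have := hf.2 a _ ha hsb
  rw [← hra] at this
  exact this.trans_lt (hr.resolve_left hr0)

variable [Nontrivial R]

theorem map_one_le {a : R} (ha : a ≠ 0) : f 1 ≤ f a := by
  simpa using hf.2 1 a one_ne_zero ha

theorem map_neg {a : R} (ha : a ≠ 0) : f (-a) = f a := by
  have h₁ := hf.2 a (-1) ha (by simp)
  have h₂ := hf.2 (-a) (-1) (neg_ne_zero.2 ha) (by simp)
  simp only [mul_neg, mul_one, neg_neg] at h₁ h₂
  omega

theorem map_of_isUnit {a : R} (ha : IsUnit a) : f a = f 1 := by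
  obtain ⟨u, rfl⟩ := ha
  have h := hf.2 (u : R) ↑u⁻¹ u.ne_zero u⁻¹.ne_zero
  rw [Units.mul_inv] at h
  exact le_antisymm h (hf.map_one_le u.ne_zero)

theorem isUnit_of_map_le_map_one {a : R} (ha : a ≠ 0) (hfa : f a ≤ f 1) : IsUnit a := by
  obtain ⟨q, r, hqr, hr⟩ := hf.1 1 a ha
  obtain rfl : r = 0 := by
    by_contra hr0
    have := hf.map_one_le hr0
    have := hr.resolve_left hr0
    omega
  exact .of_mul_eq_one q (by rw [hqr, add_zero, mul_comm])

theorem map_one_lt_of_not_isUnit {a : R} (ha : a ≠ 0) (hau : ¬IsUnit a) : f 1 < f a :=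
  (hf.map_one_le ha).lt_of_ne fun h => hau (hf.isUnit_of_map_le_map_one ha h.ge)

theorem isUnit_add (hult : IsUltraEuclideanFn f) {a b : R} (ha : IsUnit a) (hb : IsUnit b)
    (hab : a + b ≠ 0) : IsUnit (a + b) := by
  refine hf.isUnit_of_map_le_map_one hab ?_
  have := hult.2 a b ha.ne_zero hb.ne_zero hab
  rwa [hf.map_of_isUnit ha, hf.map_of_isUnit hb, max_self] at this

end IsStronglyEuclideanFn

theorem IsUniquelyEuclideanFn.isUltraEuclideanFn [Nontrivial R]
    (hu : IsUniquelyEuclideanFn f) (hf : IsStronglyEuclideanFn f) : IsUltraEuclideanFn f := by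
  refine ⟨hf.1, fun a b ha hb hab => ?_⟩
  by_contra! hlt
  obtain ⟨qr, -, huniq⟩ := hu a (a + b) hab
  have h₀ : ((0, a) : R × R) = qr := huniq (0, a) ⟨by ring, Or.inr (by dsimp; omega)⟩
  have h₁ : ((1, -b) : R × R) = qr :=
    huniq (1, -b) ⟨by ring, Or.inr (by dsimp; rw [hf.map_neg hb]; omega)⟩
  exact zero_ne_one congr($(h₀.trans h₁.symm).1)

theorem IsUniquelyEuclideanFn.eq_zero_of_mul_add_eq_zero (hu : IsUniquelyEuclideanFn f)
    {x q r : R} (hx : x ≠ 0) (h : q * x + r = 0) (hr : r = 0 ∨ f r < f x) : q = 0 ∧ r = 0 := by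
  obtain ⟨qr, -, huniq⟩ := hu 0 x hx
  have := (huniq (q, r) ⟨h.symm, hr⟩).trans (huniq (0, 0) ⟨by ring, Or.inl rfl⟩).symm
  exact Prod.ext_iff.1 this

theorem IsStronglyEuclideanFn.map_mul_le_of_eq_mul_add [IsDomain R]
    (hf : IsStronglyEuclideanFn f) (hult : IsUltraEuclideanFn f) {a q x r : R} (ha : a ≠ 0)
    (hq : q ≠ 0) (hx : x ≠ 0) (h : a = q * x + r) (hr : r = 0 ∨ f r < f x) :
    f (q * x) ≤ f a := by
  by_cases hr0 : r = 0
  · rw [h, hr0, add_zero]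
  have hqx : a + -r = q * x := by rw [h]; ring
  have hle := hult.2 a (-r) ha (neg_ne_zero.2 hr0) (hqx ▸ mul_ne_zero hq hx)
  rw [hf.map_neg hr0, hqx] at hle
  have hxqx : f x ≤ f (q * x) := mul_comm x q ▸ hf.2 x q hx hq
  have := hr.resolve_left hr0
  omega

section MinimalNonunit

variable [IsDomain R] (hf : IsStronglyEuclideanFn f)
  (hadd : ∀ a b : R, IsUnit a → IsUnit b → a + b ≠ 0 → IsUnit (a + b))
  {x : R} (hx : x ≠ 0) (hxu : ¬IsUnit x)
include hf hx hxu

theorem eval₂_unitsWithZero_injective (hu : IsUniquelyEuclideanFn f) :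
    Function.Injective (eval₂RingHom (unitsWithZero R hadd).subtype x) := by
  refine eval₂_injective_of_mul_add_eq_zero _ _ fun q c h => ?_
  have hc : (c : R) = 0 ∨ f c < f x := c.2.imp_right fun hcu =>
    hf.map_of_isUnit hcu ▸ hf.map_one_lt_of_not_isUnit hx hxu
  obtain ⟨hq, hc⟩ := hu.eq_zero_of_mul_add_eq_zero hx h hc
  exact ⟨hq, Subtype.ext hc⟩

theorem eval₂_unitsWithZero_surjective (hult : IsUltraEuclideanFn f)
    (hmin : ∀ a : R, a ≠ 0 → ¬IsUnit a → f x ≤ f a) :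
    Function.Surjective (eval₂RingHom (unitsWithZero R hadd).subtype x) := by
  refine eval₂_surjective_of_exists_mul_add _ _ f fun a => ?_
  by_cases ha : a = 0
  · exact ⟨0, 0, by simp [ha], .inl rfl⟩
  obtain ⟨q, r, hqr, hr⟩ := hf.1 a x hx
  have hrK : r ∈ unitsWithZero R hadd := by
    by_cases hr0 : r = 0
    · exact .inl hr0
    · exact .inr (by_contra fun hru => (hmin r hr0 hru).not_gt (hr.resolve_left hr0))
  refine ⟨q, ⟨r, hrK⟩, hqr, ?_⟩
  by_cases hq : q = 0
  · exact .inl hq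
  · exact .inr ((hf.map_lt_map_mul hq hx hxu).trans_le
      (hf.map_mul_le_of_eq_mul_add hult ha hq hx hqr hr))

end MinimalNonunit

theorem jodeit_rhai {R : Type u} [CommRing R] [IsDomain R]
    (f : R → ℕ) (hf : IsStronglyEuclideanFn f) (hf' : IsUniquelyEuclideanFn f) :
    IsField R ∨ ∃ (K : Type u) (_ : Field K), Nonempty (R ≃+* Polynomial K) := by
  by_cases hR : IsField R
  · exact .inl hR
  obtain ⟨x, ⟨hx, hxu⟩, hmin⟩ := (measure f).wf.has_min {a : R | a ≠ 0 ∧ ¬IsUnit a} <| by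
    by_contra! h
    exact hR (isField_of_forall_isUnit fun a ha => not_not.1 fun hau => h.subset ⟨ha, hau⟩)
  have hult := hf'.isUltraEuclideanFn hf
  have hadd : ∀ a b : R, IsUnit a → IsUnit b → a + b ≠ 0 → IsUnit (a + b) :=
    fun _ _ => hf.isUnit_add hult
  let := (isField_unitsWithZero hadd).toField
  refine .inr ⟨unitsWithZero R hadd, inferInstance, ⟨(RingEquiv.ofBijective _
    ⟨eval₂_unitsWithZero_injective hf hadd hx hxu hf',
      eval₂_unitsWithZero_surjective hf hadd hx hxu hult
        fun a ha hau => not_lt.1 (hmin a ⟨ha, hau⟩)⟩).symm⟩⟩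
end

section
/- Let R be an integral domain and f a uniquely Euclidean function on R. Then the set K = R^× ∪ {0} (the units of R together with 0) is a subfield of R: it contains 0 and 1, is closed under addition, negation, and multiplication, and every nonzero element of K has a multiplicative inverse in K. -/
namespace IsUniquelyEuclideanFn

variable {R : Type*} [CommRing R] {f : R → ℕ}

theorem isEuclideanFn (hf : IsUniquelyEuclideanFn f) : IsEuclideanFn f := fun a b hb =>
  let ⟨⟨q, r⟩, hqr, _⟩ := hf a b hb
  ⟨q, r, hqr⟩

/-- `b * c = c * b + 0 = 0 * b + b * c` are two divisions by `b` with admissible remainder. -/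
theorem eq_zero_of_dvd_of_lt (hf : IsUniquelyEuclideanFn f) {a b : R} (hba : b ∣ a)
    (hab : f a < f b) : a = 0 := by
  obtain ⟨c, rfl⟩ := hba
  by_cases hb : b = 0
  · simp [hb]
  obtain ⟨_, _, huniq⟩ := hf (b * c) b hb
  have hdiv : ((c, 0) : R × R) = (0, b * c) :=
    (huniq _ ⟨by ring, Or.inl rfl⟩).trans (huniq _ ⟨by ring, Or.inr hab⟩).symm
  exact (congrArg Prod.snd hdiv).symm

theorem le_of_isUnit (hf : IsUniquelyEuclideanFn f) {u x : R} (hu : IsUnit u) (hx : x ≠ 0) :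
    f u ≤ f x :=
  not_lt.mp fun h => hx (hf.eq_zero_of_dvd_of_lt hu.dvd h)

/-- `a = 0 * s + a = 1 * s + (a - s)` cannot both be admissible divisions. -/
theorem le_or_le_sub [Nontrivial R] (hf : IsUniquelyEuclideanFn f) {s : R} (hs : s ≠ 0)
    (a : R) : f s ≤ f a ∨ f s ≤ f (a - s) := by
  by_contra! h
  obtain ⟨_, _, huniq⟩ := hf a s hs
  have hdiv : ((0, a) : R × R) = (1, a - s) :=
    (huniq _ ⟨by ring, Or.inr h.1⟩).trans (huniq _ ⟨by ring, Or.inr h.2⟩).symm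
  exact zero_ne_one (congrArg Prod.fst hdiv)

/-- Dividing `1` by `s` leaves a remainder of `f`-value below every unit's, hence zero. -/
theorem isUnit_of_le_of_isUnit (hf : IsUniquelyEuclideanFn f) {s u : R} (hs : s ≠ 0)
    (hu : IsUnit u) (hsu : f s ≤ f u) : IsUnit s := by
  obtain ⟨q, r, hqr, hr⟩ := hf.isEuclideanFn 1 s hs
  obtain rfl : r = 0 := by
    by_contra hr0
    exact ((hr.resolve_left hr0).trans_le (hsu.trans (hf.le_of_isUnit hu hr0))).false
  exact IsUnit.of_mul_eq_one_right q (by rw [hqr, add_zero])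

theorem isUnit_add_or_eq_zero [Nontrivial R] (hf : IsUniquelyEuclideanFn f) {u v : R}
    (hu : IsUnit u) (hv : IsUnit v) : IsUnit (u + v) ∨ u + v = 0 := by
  by_cases hs : u + v = 0
  · exact Or.inr hs
  refine Or.inl ?_
  rcases hf.le_or_le_sub hs u with hle | hle
  · exact hf.isUnit_of_le_of_isUnit hs hu hle
  · rw [sub_add_cancel_left] at hle
    exact hf.isUnit_of_le_of_isUnit hs hv.neg hle

end IsUniquelyEuclideanFn

theorem units_with_zero_form_subfield {R : Type*} [CommRing R] [IsDomain R]
    (f : R → ℕ) (hf : IsUniquelyEuclideanFn f)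
    (K : Set R) (hK : K = {x : R | IsUnit x ∨ x = 0}) :
    (0 : R) ∈ K ∧ (1 : R) ∈ K ∧
    (∀ u v : R, u ∈ K → v ∈ K → u + v ∈ K) ∧
    (∀ u : R, u ∈ K → -u ∈ K) ∧
    (∀ u v : R, u ∈ K → v ∈ K → u * v ∈ K) ∧
    (∀ u : R, u ∈ K → u ≠ 0 → ∃ v ∈ K, u * v = 1) := by
  subst hK
  refine ⟨Or.inr rfl, Or.inl isUnit_one, ?_, ?_, ?_, ?_⟩
  · rintro u v (hu | rfl) (hv | rfl)
    · exact hf.isUnit_add_or_eq_zero hu hv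
    all_goals simp_all
  · rintro u (hu | rfl)
    · exact Or.inl hu.neg
    · simp
  · rintro u v (hu | rfl) (hv | rfl)
    · exact Or.inl (hu.mul hv)
    all_goals simp
  · rintro u (hu | rfl) hu0
    · exact ⟨_, Or.inl hu.unit⁻¹.isUnit, hu.mul_val_inv⟩
    · exact absurd rfl hu0
end

section
/- Let K be a field and let f be a uniquely Euclidean function on the polynomial ring K[x]. Then there exists a strictly increasing function φ from the non-negative integers to the non-negative integers such that f(p) = φ(deg p) for every nonzero polynomial p in K[x]. -/
open Polynomial

section aux

variable {K : Type*} [Field K] (f : Polynomial K → ℕ) (hf : IsUniquelyEuclideanFn f)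

include hf

theorem UE.pair_unique {a b q₁ r₁ q₂ r₂ : Polynomial K} (hb : b ≠ 0)
    (h1 : a = q₁ * b + r₁) (h1' : r₁ = 0 ∨ f r₁ < f b)
    (h2 : a = q₂ * b + r₂) (h2' : r₂ = 0 ∨ f r₂ < f b) : q₁ = q₂ ∧ r₁ = r₂ := by
  obtain ⟨qr, _, huniq⟩ := hf a b hb
  have e1 : (q₁, r₁) = qr := huniq _ ⟨h1, h1'⟩
  have e2 : (q₂, r₂) = qr := huniq _ ⟨h2, h2'⟩
  rw [← e2] at e1
  exact ⟨congrArg Prod.fst e1, congrArg Prod.snd e1⟩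

theorem UE.strong {a b : Polynomial K} (ha : a ≠ 0) (hb : b ≠ 0) : f b ≤ f (a * b) := by
  by_contra h
  push_neg at h
  have := UE.pair_unique f hf hb (a := a * b) (q₁ := a) (r₁ := 0) (q₂ := 0) (r₂ := a * b)
    (by ring) (Or.inl rfl) (by ring) (Or.inr h)
  exact ha this.1

theorem UE.unit_inv {a : Polynomial K} (ha : a ≠ 0) {c : K} (hc : c ≠ 0) :
    f (C c * a) = f a := by
  have h1 : f a ≤ f (C c * a) := UE.strong f hf (by simpa using hc) ha
  have h2 : f (C c * a) ≤ f (C c⁻¹ * (C c * a)) :=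
    UE.strong f hf (by simpa using inv_ne_zero hc) (by simp [hc, ha])
  have he : C c⁻¹ * (C c * a) = a := by
    rw [← mul_assoc, ← C_mul, inv_mul_cancel₀ hc, C_1, one_mul]
  rw [he] at h2
  omega

theorem UE.ultra {a c : Polynomial K} (ha : a ≠ 0) (hc : c ≠ 0) (hac : a + c ≠ 0) :
    f (a + c) ≤ max (f a) (f c) := by
  by_contra h
  push_neg at h
  have hfa : f a < f (a + c) := lt_of_le_of_lt (le_max_left _ _) h
  have hfc : f c < f (a + c) := lt_of_le_of_lt (le_max_right _ _) h
  have hnegc : f (-c) < f (a + c) := by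
    have : (-c : Polynomial K) = C (-1) * c := by simp
    rw [this, UE.unit_inv f hf hc (by norm_num)]
    exact hfc
  have := UE.pair_unique f hf hac (a := a) (q₁ := 0) (r₁ := a) (q₂ := 1) (r₂ := -c)
    (by ring) (Or.inr hfa) (by ring) (Or.inr hnegc)
  exact zero_ne_one this.1

variable (b : Polynomial K) (hb : b ≠ 0)

/-- The set of valid remainders modulo `b`, a `K`-submodule of `K[x]`. -/
def UE.S : Submodule K (Polynomial K) where
  carrier := {r | r = 0 ∨ f r < f b}
  zero_mem' := Or.inl rfl
  add_mem' := by
    intro x y hx hy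
    rcases eq_or_ne x 0 with rfl | hx0
    · simpa using hy
    rcases eq_or_ne y 0 with rfl | hy0
    · simpa using hx
    have hfx : f x < f b := hx.resolve_left hx0
    have hfy : f y < f b := hy.resolve_left hy0
    rcases eq_or_ne (x + y) 0 with h | h
    · exact Or.inl h
    · exact Or.inr (lt_of_le_of_lt (UE.ultra f hf hx0 hy0 h) (max_lt hfx hfy))
  smul_mem' := by
    rintro c x (rfl | hx)
    · simp
    · rcases eq_or_ne c 0 with rfl | hc
      · simp
      · rcases eq_or_ne x 0 with rfl | hx0
        · simp
        · right
          have : c • x = C c * x := by simp [Polynomial.smul_eq_C_mul]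
          rw [this, UE.unit_inv f hf hx0 hc]
          exact hx


theorem UE.mem_S {r : Polynomial K} : r ∈ UE.S f hf b ↔ (r = 0 ∨ f r < f b) := Iff.rfl

include hb

theorem UE.isCompl : IsCompl (UE.S f hf b) ((Ideal.span {b}).restrictScalars K) := by
  constructor
  · rw [Submodule.disjoint_def]
    rintro x hxS hxI
    rw [Submodule.restrictScalars_mem, Ideal.mem_span_singleton] at hxI
    obtain ⟨q, rfl⟩ := hxI
    rcases UE.mem_S f hf b |>.mp hxS with h | h
    · exact h
    · rcases eq_or_ne q 0 with rfl | hq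
      · simp
      · exfalso
        have h2 : f b ≤ f (b * q) := by
          rw [mul_comm]; exact UE.strong f hf hq hb
        omega
  · rw [codisjoint_iff, eq_top_iff]
    intro a _
    obtain ⟨⟨q, r⟩, ⟨heq, hr⟩, -⟩ := hf a b hb
    refine Submodule.mem_sup.mpr ⟨r, (UE.mem_S f hf b).mpr hr, q * b, ?_, by
      simpa [add_comm] using heq.symm⟩
    rw [Submodule.restrictScalars_mem, Ideal.mem_span_singleton]
    exact ⟨q, mul_comm q b⟩

/-- `S f b` is linearly equivalent to `K[x] / (b)`. -/
noncomputable def UE.equivQuot :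
    (AdjoinRoot b) ≃ₗ[K] UE.S f hf b :=
  ((Submodule.Quotient.restrictScalarsEquiv K (Ideal.span {b})).symm).trans
    (Submodule.quotientEquivOfIsCompl _ _ (UE.isCompl f hf b hb).symm)

theorem UE.finiteDimensional : FiniteDimensional K (UE.S f hf b) := by
  have : Module.Finite K (AdjoinRoot b) := (AdjoinRoot.powerBasis hb).finite
  exact Module.Finite.equiv (UE.equivQuot f hf b hb)

theorem UE.finrank_S : Module.finrank K (UE.S f hf b) = b.natDegree := by
  rw [← (UE.equivQuot f hf b hb).finrank_eq, (AdjoinRoot.powerBasis hb).finrank,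
    AdjoinRoot.powerBasis_dim]

omit hb

theorem UE.S_mono {a b : Polynomial K} (h : f a ≤ f b) : UE.S f hf a ≤ UE.S f hf b := by
  intro x hx
  rcases (UE.mem_S f hf a).mp hx with h0 | h0
  · exact (UE.mem_S f hf b).mpr (Or.inl h0)
  · exact (UE.mem_S f hf b).mpr (Or.inr (lt_of_lt_of_le h0 h))

theorem UE.deg_lt {a b : Polynomial K} (ha : a ≠ 0) (hb : b ≠ 0)
    (h : a.natDegree < b.natDegree) : f a < f b := by
  by_contra hle
  push_neg at hle
  have hS : UE.S f hf b ≤ UE.S f hf a := UE.S_mono f hf hle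
  have := UE.finiteDimensional f hf a ha
  have hfr := Submodule.finrank_mono hS
  rw [UE.finrank_S f hf a ha, UE.finrank_S f hf b hb] at hfr
  omega

theorem UE.deg_eq {a b : Polynomial K} (ha : a ≠ 0) (hb : b ≠ 0)
    (h : a.natDegree = b.natDegree) : f a = f b := by
  have key : ∀ a b : Polynomial K, a ≠ 0 → b ≠ 0 → a.natDegree = b.natDegree →
      f a ≤ f b → f a = f b := by
    intro a b ha hb h hle
    by_contra hne
    have hlt : f a < f b := lt_of_le_of_ne hle hne
    have hS : UE.S f hf a ≤ UE.S f hf b := UE.S_mono f hf hle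
    have := UE.finiteDimensional f hf b hb
    have heq : UE.S f hf a = UE.S f hf b := by
      apply Submodule.eq_of_le_of_finrank_le hS
      rw [UE.finrank_S f hf a ha, UE.finrank_S f hf b hb, h]
    have haMem : a ∈ UE.S f hf b := (UE.mem_S f hf b).mpr (Or.inr hlt)
    rw [← heq] at haMem
    rcases (UE.mem_S f hf a).mp haMem with h0 | h0
    · exact ha h0
    · omega
  rcases le_total (f a) (f b) with hle | hle
  · exact key a b ha hb h hle
  · exact (key b a hb ha h.symm hle).symm

end aux

theorem uniquely_euclidean_on_polynomials_eq_phi_deg {K : Type*} [Field K]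
    (f : Polynomial K → ℕ) (hf : IsUniquelyEuclideanFn f) :
    ∃ φ : ℕ → ℕ, StrictMono φ ∧ ∀ p : Polynomial K, p ≠ 0 → f p = φ p.natDegree := by
  refine ⟨fun n => f (X ^ n), ?_, ?_⟩
  · intro m n hmn
    exact UE.deg_lt f hf (pow_ne_zero m X_ne_zero) (pow_ne_zero n X_ne_zero)
      (by simpa using hmn)
  · intro p hp
    exact UE.deg_eq f hf hp (pow_ne_zero _ X_ne_zero) (by simp)
end

section
/- There exists an integral domain R and a function f from the nonzero elements of R to the non-negative integers such that f is ultra-Euclidean on R but f is neither strongly Euclidean nor uniquely Euclidean on R. (Concretely, one may take R to be the field with four elements F₄ = {0, 1, α, β} and f given by f(1) = 0, f(α) = f(β) = 1.) -/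
/-!
Over a field every function is Euclidean: the remainder can always be taken to be `0`.
On `𝔽₄` let `f x = 0` if `x = 1` and `f x = 1` otherwise. The only way to get
`f (a + b) > max (f a) (f b)` is `a = b = 1`, and then `a + b = 0` in characteristic two, so `f`
is ultra-Euclidean. For `α ∉ {0, 1}` we have `f α = 1 > 0 = f (α * α⁻¹)`, so `f` is not strongly
Euclidean, and dividing `1` by `α` has the two admissible answers `(α⁻¹, 0)` and `(0, 1)`.
-/

section Field

variable {K : Type*} [Field K]

theorem isEuclideanFn_of_field (f : K → ℕ) : IsEuclideanFn f :=
  fun a b hb => ⟨a / b, 0, by rw [div_mul_cancel₀ a hb, add_zero], Or.inl rfl⟩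

theorem not_isStronglyEuclideanFn_of_lt {f : K → ℕ} {a : K} (ha : a ≠ 0) (h : f 1 < f a) :
    ¬ IsStronglyEuclideanFn f := by
  rintro ⟨-, hmul⟩
  have := hmul a a⁻¹ ha (inv_ne_zero ha)
  rw [mul_inv_cancel₀ ha] at this
  omega

theorem not_isUniquelyEuclideanFn_of_lt {f : K → ℕ} {b r : K} (hb : b ≠ 0) (hr : r ≠ 0)
    (h : f r < f b) : ¬ IsUniquelyEuclideanFn f := by
  intro huniq
  obtain ⟨qr, -, hqr⟩ := huniq r b hb
  have hdiv : (r / b, 0) = qr := hqr _ ⟨by simp [div_mul_cancel₀ r hb], Or.inl rfl⟩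
  have hrem : (0, r) = qr := hqr _ ⟨by simp, Or.inr h⟩
  exact hr (congrArg Prod.snd (hrem.trans hdiv.symm))

end Field

def neOneIndicator {R : Type*} [CommRing R] [DecidableEq R] (x : R) : ℕ :=
  if x = 1 then 0 else 1

theorem neOneIndicator_add_le {R : Type*} [CommRing R] [CharP R 2] [DecidableEq R] {a b : R}
    (hab : a + b ≠ 0) : neOneIndicator (a + b) ≤ max (neOneIndicator a) (neOneIndicator b) := by
  have hne : a ≠ 1 ∨ b ≠ 1 := by
    by_contra! h
    rw [h.1, h.2, CharTwo.add_self_eq_zero] at hab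
    exact hab rfl
  unfold neOneIndicator
  rcases hne with ha | hb
  · simp only [ha, if_false]
    split_ifs <;> omega
  · simp only [hb, if_false]
    split_ifs <;> omega

theorem isUltraEuclideanFn_neOneIndicator {K : Type*} [Field K] [CharP K 2] [DecidableEq K] :
    IsUltraEuclideanFn (neOneIndicator : K → ℕ) :=
  ⟨isEuclideanFn_of_field _, fun _ _ _ _ hab => neOneIndicator_add_le hab⟩

theorem GaloisField.exists_ne_zero_ne_one (p : ℕ) [Fact p.Prime] {n : ℕ} (hn : n ≠ 0)
    (h : 2 < p ^ n) : ∃ a : GaloisField p n, a ≠ 0 ∧ a ≠ 1 := by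
  refine ENat.exists_ne_ne_of_three_le ?_ 0 1
  rw [ENat.card_eq_coe_natCard, GaloisField.card p n hn]
  exact_mod_cast h

theorem exists_ultra_not_strongly_not_uniquely :
    ∃ (R : Type) (_ : CommRing R) (f : R → ℕ),
      IsDomain R ∧ IsUltraEuclideanFn f ∧
      ¬ IsStronglyEuclideanFn f ∧ ¬ IsUniquelyEuclideanFn f := by
  classical
  obtain ⟨α, hα0, hα1⟩ := GaloisField.exists_ne_zero_ne_one 2 two_ne_zero (by norm_num)
  have hlt : neOneIndicator (1 : GaloisField 2 2) < neOneIndicator α := by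
    simp [neOneIndicator, hα1]
  exact ⟨GaloisField 2 2, inferInstance, neOneIndicator, inferInstance,
    isUltraEuclideanFn_neOneIndicator, not_isStronglyEuclideanFn_of_lt hα0 hlt,
    not_isUniquelyEuclideanFn_of_lt hα0 one_ne_zero hlt⟩
end

section
/- Let F₄ be the field with four elements and consider the polynomial ring F₄[x]. Define f on nonzero polynomials by f(p) = 0 if p = 1, and f(p) = deg(p) + 1 otherwise. Then f is ultra-Euclidean on F₄[x], but f is not constant on the nonzero polynomials of degree 0. -/
open Polynomial
open scoped Classical

theorem genEuc {K : Type*} [Field K] :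
    ∀ a b : K[X], b ≠ 0 → ∃ q r : K[X], a = q * b + r ∧
      (r = 0 ∨ (if r = 1 then 0 else r.natDegree + 1) < (if b = 1 then 0 else b.natDegree + 1)) := by
  intro a b hb
  by_cases hb0 : b.natDegree = 0
  · obtain ⟨c, rfl⟩ := natDegree_eq_zero.mp hb0
    have hc : c ≠ 0 := fun h => hb (by simp [h])
    exact ⟨a * C c⁻¹, 0, by rw [mul_assoc, ← C_mul, inv_mul_cancel₀ hc]; simp, Or.inl rfl⟩
  · refine ⟨a / b, a % b, by rw [mul_comm]; exact (EuclideanDomain.div_add_mod a b).symm, ?_⟩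
    by_cases hr : a % b = 0
    · exact Or.inl hr
    · right
      have hb1 : b ≠ 1 := fun h => hb0 (by simp [h])
      have hnd : (a % b).natDegree < b.natDegree :=
        natDegree_lt_natDegree hr (EuclideanDomain.mod_lt a hb)
      rw [if_neg hb1]
      split <;> omega

theorem genUltra {K : Type*} [Field K] (h2 : (1 : K[X]) + 1 = 0) :
    ∀ a b : K[X], a ≠ 0 → b ≠ 0 → a + b ≠ 0 →
      (if a + b = 1 then 0 else (a + b).natDegree + 1) ≤
        max (if a = 1 then 0 else a.natDegree + 1) (if b = 1 then 0 else b.natDegree + 1) := by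
  intro a b ha hb hab
  split
  · exact Nat.zero_le _
  have hd : (a + b).natDegree ≤ max a.natDegree b.natDegree := natDegree_add_le a b
  rcases eq_or_ne a 1 with rfl | ha1
  · rcases eq_or_ne b 1 with rfl | hb1
    · exact absurd h2 hab
    · rw [if_pos rfl, if_neg hb1]
      have : (1 + b).natDegree ≤ b.natDegree := by
        simpa using hd
      omega
  · rcases eq_or_ne b 1 with rfl | hb1
    · rw [if_neg ha1, if_pos rfl]
      have : (a + 1).natDegree ≤ a.natDegree := by simpa using hd
      omega
    · rw [if_neg ha1, if_neg hb1]
      omega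

open scoped Classical in
theorem ultra_euclidean_not_constant_on_degree_zero :
    IsUltraEuclideanFn
      (fun p : Polynomial (GaloisField 2 2) => if p = 1 then 0 else p.natDegree + 1) ∧
    ¬ (∀ p q : Polynomial (GaloisField 2 2), p ≠ 0 → q ≠ 0 →
        p.natDegree = 0 → q.natDegree = 0 →
        (if p = 1 then 0 else p.natDegree + 1) = (if q = 1 then 0 else q.natDegree + 1)) := by
  have h2 : (1 : (GaloisField 2 2)[X]) + 1 = 0 := CharTwo.add_self_eq_zero 1
  refine ⟨⟨genEuc, genUltra h2⟩, ?_⟩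
  intro h
  letI : Fintype (GaloisField 2 2) := Fintype.ofFinite _
  have hcard : Fintype.card (GaloisField 2 2) = 4 := by
    have := GaloisField.card 2 2 (by norm_num)
    rw [Nat.card_eq_fintype_card] at this
    omega
  obtain ⟨c, hc0, hc1⟩ : ∃ c : GaloisField 2 2, c ≠ 0 ∧ c ≠ 1 := by
    by_contra hco
    push_neg at hco
    have hsub : (Finset.univ : Finset (GaloisField 2 2)) ⊆ {0, 1} := fun c _ => by
      rcases eq_or_ne c 0 with rfl | hcz
      · simp
      · simp [hco c hcz]
    have := Finset.card_le_card hsub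
    simp [Finset.card_univ, hcard] at this
  have := h 1 (C c) one_ne_zero (C_ne_zero.mpr hc0) natDegree_one (natDegree_C c)
  rw [if_pos rfl, if_neg (fun hh => hc1 (C_inj.mp (hh.trans C_1.symm)))] at this
  simp at this
end

section
/- Let R be an integral domain and f a uniquely Euclidean function on R with R not a field, and let x be a nonzero element of R, not a unit, at which f attains its minimum over all elements outside K = R^× ∪ {0}. Then for every a in R, with q, r the unique elements satisfying a = q*x + r and (r = 0 or f(r) < f(x)), the element r lies in K, and if q ≠ 0 then f(q) < f(a). -/
/-!
Uniqueness of division forces `f` to be monotone under multiplication and ultrametric: if either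
inequality failed, two different pairs `(q, r)` would be admissible. Monotonicity is strict for a
nonunit factor `x`, since the remainder of `q` modulo `q * x` is a nonzero multiple of `q`.
So if `a = q * x + r` with `r` a unit, then `f r ≤ f q < f (q * x)`, and the ultrametric
inequality for `q * x = a - r` gives `f (q * x) ≤ f a`.
-/

namespace IsUniquelyEuclideanFn

variable {R : Type*} [CommRing R] {f : R → ℕ}

theorem exists_division (hf : IsUniquelyEuclideanFn f) (a : R) {b : R} (hb : b ≠ 0) :
    ∃ q r : R, a = q * b + r ∧ (r = 0 ∨ f r < f b) := by
  obtain ⟨⟨q, r⟩, h, -⟩ := hf a b hb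
  exact ⟨q, r, h⟩

theorem map_le_map_mul (hf : IsUniquelyEuclideanFn f) {a b : R} (ha : a ≠ 0) (hb : b ≠ 0) :
    f a ≤ f (a * b) := by
  by_contra! h
  obtain ⟨_, _, huniq⟩ := hf (a * b) a ha
  have h₁ := huniq (b, 0) ⟨by ring, Or.inl rfl⟩
  have h₂ := huniq (0, a * b) ⟨by ring, Or.inr h⟩
  exact hb (congrArg Prod.fst (h₁.trans h₂.symm))

theorem map_le_of_isUnit [Nontrivial R] (hf : IsUniquelyEuclideanFn f) {u b : R} (hu : IsUnit u)
    (hb : b ≠ 0) : f u ≤ f b := by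
  obtain ⟨u, rfl⟩ := hu
  have := hf.map_le_map_mul u.ne_zero (b := ↑u⁻¹ * b) (by simpa using hb)
  rwa [Units.mul_inv_cancel_left] at this

theorem map_sub_le_max [Nontrivial R] (hf : IsUniquelyEuclideanFn f) {a b : R} (hab : a ≠ b) :
    f (a - b) ≤ max (f a) (f b) := by
  by_contra! h
  rw [max_lt_iff] at h
  obtain ⟨_, _, huniq⟩ := hf a (a - b) (sub_ne_zero.2 hab)
  have h₀ := huniq (0, a) ⟨by ring, Or.inr h.1⟩
  have h₁ := huniq (1, b) ⟨by ring, Or.inr h.2⟩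
  exact zero_ne_one (congrArg Prod.fst (h₀.trans h₁.symm))

theorem map_lt_map_mul_of_not_isUnit [NoZeroDivisors R] (hf : IsUniquelyEuclideanFn f)
    {a b : R} (ha : a ≠ 0) (hb : b ≠ 0) (hbu : ¬IsUnit b) : f a < f (a * b) := by
  refine (hf.map_le_map_mul ha hb).lt_of_ne fun heq => ?_
  obtain ⟨s, t, hdiv, ht⟩ := hf.exists_division a (mul_ne_zero ha hb)
  have ht_eq : t = a * (1 - s * b) := by linear_combination -hdiv
  have hc : 1 - s * b ≠ 0 := fun hc =>
    hbu (.of_mul_eq_one_right s (sub_eq_zero.1 hc).symm)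
  have ht0 : t ≠ 0 := ht_eq ▸ mul_ne_zero ha hc
  have := hf.map_le_map_mul ha hc
  rw [← ht_eq] at this
  exact (ht.resolve_left ht0).not_ge (heq ▸ this)

end IsUniquelyEuclideanFn

theorem division_by_minimal_nonunit_general {R : Type*} [CommRing R] [IsDomain R]
    (f : R → ℕ) (hf : IsUniquelyEuclideanFn f)
    (x : R) (hx : ¬ (IsUnit x ∨ x = 0))
    (hmin : ∀ y : R, ¬ (IsUnit y ∨ y = 0) → f x ≤ f y) :
    ∀ a q r : R, a = q * x + r → (r = 0 ∨ f r < f x) →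
      (IsUnit r ∨ r = 0) ∧ (q ≠ 0 → f q < f a) := by
  intro a q r heq hr
  have hrK : IsUnit r ∨ r = 0 := by
    refine hr.elim Or.inr fun hlt => ?_
    by_contra hK
    exact (hmin r hK).not_gt hlt
  refine ⟨hrK, fun hq => ?_⟩
  push Not at hx
  have hqx : f q < f (q * x) := hf.map_lt_map_mul_of_not_isUnit hq hx.2 hx.1
  suffices f (q * x) ≤ f a by omega
  rcases hrK with hu | rfl
  · have hrqx : f r < f (q * x) := (hf.map_le_of_isUnit hu hq).trans_lt hqx
    have hsub : q * x = a - r := by rw [heq]; ring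
    have hne : a ≠ r := sub_ne_zero.1 (hsub ▸ mul_ne_zero hq hx.2)
    have := hf.map_sub_le_max hne
    rw [← hsub] at this
    exact (le_max_iff.1 this).resolve_right hrqx.not_ge
  · rw [heq, add_zero]

theorem division_by_minimal_nonunit {R : Type*} [CommRing R] [IsDomain R]
    (f : R → ℕ) (hf : IsUniquelyEuclideanFn f) (hR : ¬ IsField R)
    (x : R) (hx : ¬ (IsUnit x ∨ x = 0))
    (hmin : ∀ y : R, ¬ (IsUnit y ∨ y = 0) → f x ≤ f y) :
    ∀ a q r : R, a = q * x + r → (r = 0 ∨ f r < f x) →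
      (IsUnit r ∨ r = 0) ∧ (q ≠ 0 → f q < f a) :=
  division_by_minimal_nonunit_general f hf x hx hmin
end
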